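/- arXiv:2302.14491 — 6 statements merged into one kernel-verified Lean document; each statement's English description precedes it below -/
import Mathlib

section
/- For a prime p, a natural number n, and a ∈ ZMod(p^n), the preimage of {a} under the projection PadicInt.toZModPow n : ℤ_[p] → ZMod(p^n) equals the metric ball in ℤ_[p] centered at the lift of a to ℤ_[p] with radius p^(1−n). -/
/-- The preimage of `{a}` under `PadicInt.toZModPow n : ℤ_[p] → ZMod (p ^ n)` is the
metric ball centered at the canonical lift of `a` to `ℤ_[p]` of radius `p ^ (1 - n)`. -/
theorem preimage_toZModPow_singleton_eq_ball (p : ℕ) [Fact p.Prime] (n : ℕ)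
    (a : ZMod (p ^ n)) :
    (PadicInt.toZModPow n) ⁻¹' ({a} : Set (ZMod (p ^ n))) =
      Metric.ball ((a.val : ℤ_[p])) ((p : ℝ) ^ (1 - (n : ℤ))) := by
  ext x
  have h1 : (1 : ℤ) - n = -n + 1 := by ring
  simp only [Set.mem_preimage, Set.mem_singleton_iff, Metric.mem_ball, dist_eq_norm, h1,
    ← PadicInt.norm_le_pow_iff_norm_lt_pow_add_one, PadicInt.norm_le_pow_iff_mem_span_pow,
    ← PadicInt.ker_toZModPow, RingHom.mem_ker, map_sub, sub_eq_zero, map_natCast,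
    ZMod.natCast_zmod_val]
end

section
/- Let R be a commutative monoid with zero, and let m, n be coprime natural numbers with m·n > 0. If χ is a Dirichlet character over R of level m·n whose conductor is divisible by m, then there exist a Dirichlet character χ₁ of level m and a Dirichlet character χ₂ of level n such that χ₁ is primitive and χ equals the product of the extension of χ₁ to level m·n and the extension of χ₂ to level m·n. -/
open scoped BigOperators


/-- A Dirichlet character of level `n` over a monoid `R` is a monoid homomorphism
`(ZMod n)ˣ →* Rˣ`. -/
abbrev DirichletChar (R : Type*) [Monoid R] (n : ℕ) := (ZMod n)ˣ →* Rˣ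

namespace DirichletChar

variable {R : Type*} [Monoid R] {n : ℕ}

/-- The function `ZMod n → R` associated to a Dirichlet character, extending it by
zero on non-units. -/
noncomputable def asso {S : Type*} [MonoidWithZero S] {m : ℕ} (χ : DirichletChar S m) :
    ZMod m → S :=
  Function.extend (Units.coeHom (ZMod m)) ((Units.coeHom S) ∘ χ) 0

/-- Extend a Dirichlet character of level `n` to level `m` when `n ∣ m`. -/
def changeLevel {m : ℕ} (h : n ∣ m) (χ : DirichletChar R n) : DirichletChar R m :=
  χ.comp (Units.map (ZMod.castHom h (ZMod n)).toMonoidHom)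

/-- `χ` factors through `d` if `d ∣ n` and `χ` is the extension to level `n` of a
character of level `d`. -/
def FactorsThrough (χ : DirichletChar R n) (d : ℕ) : Prop :=
  ∃ (h : d ∣ n) (χ₀ : DirichletChar R d), χ = changeLevel h χ₀

/-- The conductor of a Dirichlet character : the least level through which it factors. -/
noncomputable def conductor (χ : DirichletChar R n) : ℕ :=
  sInf {d : ℕ | χ.FactorsThrough d}

/-- A Dirichlet character is primitive if its conductor equals its level. -/
def IsPrimitive (χ : DirichletChar R n) : Prop := χ.conductor = n

lemma factorsThrough_self (χ : DirichletChar R n) : χ.FactorsThrough n := by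
  refine ⟨dvd_rfl, χ, ?_⟩
  show χ = χ.comp (Units.map (ZMod.castHom dvd_rfl (ZMod n)).toMonoidHom)
  rw [ZMod.castHom_self]
  ext x
  simp

lemma factorsThrough_conductor (χ : DirichletChar R n) : χ.FactorsThrough χ.conductor := by
  have h : {d : ℕ | χ.FactorsThrough d}.Nonempty := ⟨n, χ.factorsThrough_self⟩
  exact Nat.sInf_mem h

/-- The primitive character associated to a Dirichlet character : a character of
level the conductor through which it factors. -/
noncomputable def assoPrimitive (χ : DirichletChar R n) : DirichletChar R χ.conductor :=
  χ.factorsThrough_conductor.choose_spec.choose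

/-- The multiplication of two Dirichlet characters : the primitive character associated to
the product of their extensions to the lcm of the levels. -/
noncomputable def dmul {S : Type*} [CommMonoid S] {m k : ℕ} (χ₁ : DirichletChar S m)
    (χ₂ : DirichletChar S k) :
    DirichletChar S (changeLevel (dvd_lcm_left m k) χ₁ *
      changeLevel (dvd_lcm_right m k) χ₂).conductor :=
  assoPrimitive _

/-- A Dirichlet character is even if it sends `-1` to `1`. -/
def IsEven (χ : DirichletChar R n) : Prop := ((χ (-1) : Rˣ) : R) = 1

/-- A Dirichlet character is odd if it sends `-1` to `-1`. -/
def IsOdd {S : Type*} [Monoid S] [HasDistribNeg S] {m : ℕ} (χ : DirichletChar S m) : Prop :=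
  ((χ (-1) : Sˣ) : S) = -1

end DirichletChar


namespace DirichletChar

variable {R : Type*} [Monoid R]

lemma eval_eq_one_of_factorsThrough {N d : ℕ} (hd : d ∣ N) (χ : DirichletChar R N)
    (hf : χ.FactorsThrough d) {u : (ZMod N)ˣ} (hu : ZMod.unitsMap hd u = 1) : χ u = 1 := by
  obtain ⟨h, χ₀, rfl⟩ := hf
  have hu' : ZMod.unitsMap h u = 1 := hu
  show χ₀ (ZMod.unitsMap h u) = 1
  rw [hu', map_one]

lemma factorsThrough_of_ker {N d : ℕ} [NeZero N] (hd : d ∣ N) (χ : DirichletChar R N)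
    (h : ∀ u, ZMod.unitsMap hd u = 1 → χ u = 1) : χ.FactorsThrough d := by
  have hker : (ZMod.unitsMap hd).ker ≤ χ.ker := fun u hu => h u hu
  let E := (ZMod.unitsMap hd).liftOfSurjective (ZMod.unitsMap_surjective hd) ⟨χ, hker⟩
  refine ⟨hd, E, ?_⟩
  ext u
  have hE : E (ZMod.unitsMap hd u) = χ u :=
    MonoidHom.liftOfRightInverse_comp_apply _ _
      (Function.rightInverse_surjInv (ZMod.unitsMap_surjective hd)) ⟨χ, hker⟩ u
  exact congrArg Units.val hE.symm

lemma factorsThrough_gcd {N a b : ℕ} [NeZero N] (χ : DirichletChar R N)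
    (ha : χ.FactorsThrough a) (hb : χ.FactorsThrough b) :
    χ.FactorsThrough (Nat.gcd a b) := by
  have haN : a ∣ N := ha.choose
  have hbN : b ∣ N := hb.choose
  have hN : N ≠ 0 := NeZero.ne N
  have ha0 : a ≠ 0 := by rintro rfl; exact hN (zero_dvd_iff.mp haN)
  have hg0 : Nat.gcd a b ≠ 0 := fun h => ha0 (Nat.eq_zero_of_gcd_eq_zero_left h)
  apply factorsThrough_of_ker ((Nat.gcd_dvd_left a b).trans haN)
  intro u hu
  set x := ((u : ZMod N)).val with hxdef
  have hxN : Nat.Coprime x N := ZMod.val_coe_unit_coprime u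
  have hxg : (1 : ℕ) ≡ x [MOD Nat.gcd a b] := by
    haveI : NeZero (Nat.gcd a b) := ⟨hg0⟩
    have h1 : ((x : ℕ) : ZMod (Nat.gcd a b)) = ((1 : ℕ) : ZMod (Nat.gcd a b)) := by
      have h2 := congrArg Units.val hu
      have h3 : (ZMod.castHom ((Nat.gcd_dvd_left a b).trans haN) (ZMod (Nat.gcd a b)))
          ((u : ZMod N)) = 1 := h2
      rw [ZMod.castHom_apply] at h3
      rw [Nat.cast_one, ← h3, hxdef, ZMod.natCast_val]
    exact ((ZMod.natCast_eq_natCast_iff _ _ _).mp h1).symm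
  obtain ⟨k, hk1, hkx⟩ := Nat.chineseRemainder' hxg
  have hL : Nat.lcm a b ∣ N := Nat.lcm_dvd haN hbN
  have hka : Nat.Coprime k a := by
    have := Nat.ModEq.gcd_eq hk1
    simpa [Nat.Coprime] using this.trans (by simp)
  have hkb : Nat.Coprime k b := by
    have := Nat.ModEq.gcd_eq hkx
    have hx_b : Nat.Coprime x b := hxN.coprime_dvd_right hbN
    simpa [Nat.Coprime] using this.trans hx_b
  have hkL : Nat.Coprime k (Nat.lcm a b) :=
    Nat.Coprime.coprime_dvd_right (Nat.lcm_dvd (dvd_mul_right a b) (dvd_mul_left b a))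
      (Nat.Coprime.mul_right hka hkb)
  obtain ⟨V, hV⟩ := ZMod.unitsMap_surjective hL (ZMod.unitOfCoprime k hkL)
  have hVa : ZMod.unitsMap haN V = 1 := by
    have h := DFunLike.congr_fun
      (ZMod.unitsMap_comp (Nat.dvd_lcm_left a b) hL) V
    have h' : ZMod.unitsMap (Nat.dvd_lcm_left a b) (ZMod.unitsMap hL V)
        = ZMod.unitsMap haN V := h
    rw [hV] at h'
    rw [← h']
    apply Units.ext
    show (ZMod.castHom (Nat.dvd_lcm_left a b) (ZMod a))
        ((ZMod.unitOfCoprime k hkL : ZMod (Nat.lcm a b))) = 1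
    rw [ZMod.coe_unitOfCoprime, map_natCast]
    have : ((k : ℕ) : ZMod a) = ((1 : ℕ) : ZMod a) := (ZMod.natCast_eq_natCast_iff _ _ _).mpr hk1
    simpa using this
  have hVb : ZMod.unitsMap hbN V = ZMod.unitsMap hbN u := by
    have h := DFunLike.congr_fun (ZMod.unitsMap_comp (Nat.dvd_lcm_right a b) hL) V
    have h' : ZMod.unitsMap (Nat.dvd_lcm_right a b) (ZMod.unitsMap hL V)
        = ZMod.unitsMap hbN V := h
    rw [hV] at h'
    rw [← h']
    apply Units.ext
    show (ZMod.castHom (Nat.dvd_lcm_right a b) (ZMod b))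
        ((ZMod.unitOfCoprime k hkL : ZMod (Nat.lcm a b)))
      = (ZMod.castHom hbN (ZMod b)) ((u : ZMod N))
    rw [ZMod.coe_unitOfCoprime, map_natCast, ZMod.castHom_apply, ← ZMod.natCast_val]
    exact (ZMod.natCast_eq_natCast_iff _ _ _).mpr hkx
  have hsplit : u = V * (V⁻¹ * u) := by group
  rw [hsplit, map_mul]
  have h1 : χ V = 1 := eval_eq_one_of_factorsThrough haN χ ha hVa
  have h2 : χ (V⁻¹ * u) = 1 := by
    apply eval_eq_one_of_factorsThrough hbN χ hb
    rw [map_mul, map_inv, hVb]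
    group
  rw [h1, h2, one_mul]

end DirichletChar

/-- If `m` and `n` are coprime with `m * n > 0` and `χ` is a Dirichlet character of level
`m * n` whose conductor is divisible by `m`, then `χ` factors as the product of a
primitive character of level `m` and a character of level `n`, both extended to level
`m * n`. -/
theorem exists_eq_mul_of_coprime_of_dvd_conductor {R : Type*} [CommMonoidWithZero R]
    {m n : ℕ} (hmn : 0 < m * n) (hcop : m.Coprime n) (χ : DirichletChar R (m * n))
    (hχ : m ∣ χ.conductor) :
    ∃ (χ₁ : DirichletChar R m) (χ₂ : DirichletChar R n), χ₁.IsPrimitive ∧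
      χ = DirichletChar.changeLevel (dvd_mul_right m n) χ₁ *
        DirichletChar.changeLevel (dvd_mul_left n m) χ₂ := by
  have hm0 : m ≠ 0 := by rintro rfl; simp at hmn
  have hn0 : n ≠ 0 := by rintro rfl; simp at hmn
  haveI : NeZero (m * n) := ⟨hmn.ne'⟩
  let e := ZMod.chineseRemainder hcop
  let E : (ZMod (m * n))ˣ ≃* (ZMod m)ˣ × (ZMod n)ˣ :=
    (Units.mapEquiv e.toMulEquiv).trans MulEquiv.prodUnits
  have he : ∀ x : ZMod (m * n), (e x).1 = ZMod.castHom (dvd_mul_right m n) (ZMod m) x ∧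
      (e x).2 = ZMod.castHom (dvd_mul_left n m) (ZMod n) x := by
    intro x
    have h0 : e x = (ZMod.cast x : ZMod m × ZMod n) := rfl
    constructor
    · rw [h0, ZMod.castHom_apply, Prod.fst_zmod_cast]
    · rw [h0, ZMod.castHom_apply, Prod.snd_zmod_cast]
  have hE : ∀ u : (ZMod (m * n))ˣ,
      E u = (ZMod.unitsMap (dvd_mul_right m n) u, ZMod.unitsMap (dvd_mul_left n m) u) := by
    intro u
    refine Prod.ext (Units.ext ?_) (Units.ext ?_)
    · exact (he (u : ZMod (m * n))).1
    · exact (he (u : ZMod (m * n))).2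
  let Φ : (ZMod m)ˣ × (ZMod n)ˣ →* Rˣ := χ.comp E.symm.toMonoidHom
  let χ₁ : DirichletChar R m := Φ.comp (MonoidHom.inl (ZMod m)ˣ (ZMod n)ˣ)
  let χ₂ : DirichletChar R n := Φ.comp (MonoidHom.inr (ZMod m)ˣ (ZMod n)ˣ)
  have hkey : χ = DirichletChar.changeLevel (dvd_mul_right m n) χ₁ *
      DirichletChar.changeLevel (dvd_mul_left n m) χ₂ := by
    refine MonoidHom.ext fun u => ?_
    have h2 : (E u) = ((E u).1, 1) * (1, (E u).2) := by
      ext <;> simp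
    have hΦ : Φ (E u) = χ u := by
      simp only [Φ, MonoidHom.comp_apply, MulEquiv.coe_toMonoidHom, MulEquiv.symm_apply_apply]
    have h0 : χ u = χ₁ (E u).1 * χ₂ (E u).2 := by
      rw [← hΦ]
      conv_lhs => rw [h2]
      rw [map_mul]
      rfl
    rw [h0, hE u]
    rfl
  have hc₁m : χ₁.conductor ∣ m := χ₁.factorsThrough_conductor.choose
  have hc₁nN : χ₁.conductor * n ∣ m * n := mul_dvd_mul_right hc₁m n
  have hfac : χ.FactorsThrough (χ₁.conductor * n) := by
    apply DirichletChar.factorsThrough_of_ker hc₁nN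
    intro u hu
    have e1 : ZMod.unitsMap (dvd_mul_left n m) u = 1 := by
      have h := DFunLike.congr_fun (ZMod.unitsMap_comp (dvd_mul_left n χ₁.conductor) hc₁nN) u
      have h' : ZMod.unitsMap (dvd_mul_left n χ₁.conductor) (ZMod.unitsMap hc₁nN u)
          = ZMod.unitsMap (dvd_mul_left n m) u := h
      rw [hu, map_one] at h'
      exact h'.symm
    have e2 : ZMod.unitsMap hc₁m (ZMod.unitsMap (dvd_mul_right m n) u) = 1 := by
      have h := DFunLike.congr_fun (ZMod.unitsMap_comp hc₁m (dvd_mul_right m n)) u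
      have h2 := DFunLike.congr_fun
        (ZMod.unitsMap_comp (dvd_mul_right χ₁.conductor n) hc₁nN) u
      have h2' : ZMod.unitsMap (dvd_mul_right χ₁.conductor n) (ZMod.unitsMap hc₁nN u)
          = ZMod.unitsMap (hc₁m.trans (dvd_mul_right m n)) u := h2
      rw [hu, map_one] at h2'
      have h' : ZMod.unitsMap hc₁m (ZMod.unitsMap (dvd_mul_right m n) u)
          = ZMod.unitsMap (hc₁m.trans (dvd_mul_right m n)) u := h
      rw [h', ← h2']
    have hχ₁u : χ₁ (ZMod.unitsMap (dvd_mul_right m n) u) = 1 :=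
      DirichletChar.eval_eq_one_of_factorsThrough hc₁m χ₁ χ₁.factorsThrough_conductor e2
    rw [hkey, MonoidHom.mul_apply]
    have hl : (DirichletChar.changeLevel (dvd_mul_right m n) χ₁) u
        = χ₁ (ZMod.unitsMap (dvd_mul_right m n) u) := rfl
    have hr : (DirichletChar.changeLevel (dvd_mul_left n m) χ₂) u
        = χ₂ (ZMod.unitsMap (dvd_mul_left n m) u) := rfl
    rw [hl, hr, hχ₁u, e1, map_one, one_mul]
  have hc0 : χ.conductor ≠ 0 := by
    intro h0
    have hdvd := χ.factorsThrough_conductor.choose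
    rw [h0] at hdvd
    exact absurd (zero_dvd_iff.mp hdvd) hmn.ne'
  have hg : χ.FactorsThrough (Nat.gcd χ.conductor (χ₁.conductor * n)) :=
    DirichletChar.factorsThrough_gcd χ χ.factorsThrough_conductor hfac
  have hle : χ.conductor ≤ Nat.gcd χ.conductor (χ₁.conductor * n) := Nat.sInf_le hg
  have hgc : Nat.gcd χ.conductor (χ₁.conductor * n) = χ.conductor :=
    Nat.le_antisymm (Nat.le_of_dvd (Nat.pos_of_ne_zero hc0) (Nat.gcd_dvd_left _ _)) hle
  have hcdvd : χ.conductor ∣ χ₁.conductor * n := hgc ▸ Nat.gcd_dvd_right _ _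
  have hmc₁ : m ∣ χ₁.conductor := hcop.dvd_of_dvd_mul_right (hχ.trans hcdvd)
  have hprim : χ₁.IsPrimitive := Nat.dvd_antisymm hc₁m hmc₁
  exact ⟨χ₁, χ₂, hprim, hkey⟩
end

section
/- Let S be a commutative ℚ-algebra, ψ a Dirichlet character over S of level n, and m a natural number. For every positive natural number F that is a multiple of the conductor of ψ, the m-th generalized Bernoulli number satisfies B_{m,ψ} = F^{m-1} · ∑_{a=1}^{F} ψ₀(a) · B_m(a/F), where ψ₀ is the primitive character associated to ψ evaluated via its zero-extended associated function, and B_m is the m-th Bernoulli polynomial evaluated at a/F via algebraMap ℚ S. -/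
open scoped BigOperators


/-- The `m`-th generalized Bernoulli number of a Dirichlet character. -/
noncomputable def generalBernoulliNumber {S : Type*} [CommSemiring S] [Algebra ℚ S] {n : ℕ}
    (ψ : DirichletChar S n) (m : ℕ) : S :=
  algebraMap ℚ S ((ψ.conductor : ℚ) ^ ((m : ℤ) - 1)) *
    ∑ a ∈ Finset.range ψ.conductor,
      ψ.assoPrimitive.asso (a.succ : ZMod ψ.conductor) *
        algebraMap ℚ S ((Polynomial.bernoulli m).eval ((a.succ : ℚ) / (ψ.conductor : ℚ)))


/-!
The sum over a multiple `F = c d` of the conductor `c` splits along residues `r` mod `c`,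
on which the character is constant, into the inner sums `∑_{j<d} B_m((r + 1)/F + j/d)`.
Raabe's multiplication formula `B_m(d x) = d^(m-1) ∑_{j<d} B_m(x + j/d)` collapses each of
them to `d^(1-m) B_m((r + 1)/c)`. The multiplication formula follows from the generating
function `(e^t - 1) ∑ B_n(x) tⁿ/n! = t e^(x t)` and the geometric sum
`∑_{j<d} e^(j t/d) (e^(t/d) - 1) = e^t - 1`.
-/

open Finset

namespace PowerSeries

lemma rescale_exp_sub_one_ne_zero {a : ℚ} (ha : a ≠ 0) : rescale a (exp ℚ) - 1 ≠ 0 := by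
  intro h
  simpa [coeff_rescale, coeff_exp, ha] using congrArg (coeff 1) h

lemma sum_range_rescale_exp_mul_sub_one {k : ℕ} (hk : k ≠ 0) :
    (∑ j ∈ range k, rescale ((j : ℚ) / k) (exp ℚ)) * (rescale (1 / k : ℚ) (exp ℚ) - 1) =
      exp ℚ - 1 := by
  have hpow (j : ℕ) : rescale ((j : ℚ) / k) (exp ℚ) = rescale (1 / k : ℚ) (exp ℚ) ^ j := by
    rw [← map_pow, exp_pow_eq_rescale_exp, rescale_rescale, mul_one_div]
  simp_rw [hpow]
  rw [geom_sum_mul, ← hpow, div_self (by exact_mod_cast hk), rescale_one, RingHom.id_apply]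

end PowerSeries

namespace Polynomial

open PowerSeries

noncomputable def bernoulliEGF (t : ℚ) : ℚ⟦X⟧ :=
  PowerSeries.mk fun n => aeval t ((1 / n.factorial : ℚ) • bernoulli n)

lemma coeff_bernoulliEGF (t : ℚ) (n : ℕ) :
    PowerSeries.coeff n (bernoulliEGF t) = (bernoulli n).eval t / n.factorial := by
  simp [bernoulliEGF, div_eq_inv_mul]

lemma sum_range_bernoulliEGF_add_div {k : ℕ} (hk : k ≠ 0) (x : ℚ) :
    ∑ j ∈ range k, bernoulliEGF (x + j / k) =
      PowerSeries.C (k : ℚ) * rescale (1 / k : ℚ) (bernoulliEGF (k * x)) := by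
  have hk' : (k : ℚ) ≠ 0 := by exact_mod_cast hk
  have hsum : (∑ j ∈ range k, bernoulliEGF (x + j / k)) * (exp ℚ - 1) =
      PowerSeries.X * rescale x (exp ℚ) * ∑ j ∈ range k, rescale ((j : ℚ) / k) (exp ℚ) := by
    simp_rw [sum_mul, mul_sum, bernoulliEGF, bernoulli_generating_function, mul_assoc,
      exp_mul_exp_eq_exp_add]
  have hrescale : rescale (1 / k : ℚ) (bernoulliEGF (k * x)) * (rescale (1 / k : ℚ) (exp ℚ) - 1) =
      PowerSeries.C (1 / k : ℚ) * PowerSeries.X * rescale x (exp ℚ) := by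
    rw [← map_one (rescale (1 / k : ℚ)), ← map_sub, ← map_mul, bernoulliEGF,
      bernoulli_generating_function, map_mul, rescale_X, rescale_rescale,
      mul_one_div, mul_div_cancel_left₀ _ hk', mul_right_comm]
  refine mul_right_cancel₀ (mul_ne_zero (by simpa using rescale_exp_sub_one_ne_zero one_ne_zero)
    (rescale_exp_sub_one_ne_zero (one_div_ne_zero hk'))) ?_
  calc _ = PowerSeries.X * rescale x (exp ℚ) * (exp ℚ - 1) := by
        rw [← mul_assoc, hsum, mul_assoc, sum_range_rescale_exp_mul_sub_one hk]
    _ = _ := by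
        rw [mul_comm (exp ℚ - 1), ← mul_assoc, mul_assoc _ _ (rescale _ _ - 1), hrescale,
          ← mul_assoc, ← mul_assoc, ← map_mul, mul_one_div_cancel hk', map_one, one_mul]

theorem zpow_mul_sum_range_bernoulli_eval_add_div {k : ℕ} (hk : k ≠ 0) (m : ℕ) (x : ℚ) :
    (k : ℚ) ^ ((m : ℤ) - 1) * ∑ j ∈ range k, (bernoulli m).eval (x + j / k) =
      (bernoulli m).eval (k * x) := by
  have hk' : (k : ℚ) ≠ 0 := by exact_mod_cast hk
  have h := congrArg (PowerSeries.coeff m) (sum_range_bernoulliEGF_add_div hk x)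
  simp only [map_sum, coeff_bernoulliEGF, PowerSeries.coeff_C_mul, coeff_rescale] at h
  rw [← sum_div, mul_div_assoc', mul_div_assoc', div_left_inj' (by positivity)] at h
  rw [h, zpow_sub₀ hk', zpow_natCast, zpow_one, one_div, inv_pow]
  field_simp

lemma zpow_mul_sum_range_bernoulli_eval_mul_add {c d : ℕ} (hc : c ≠ 0) (hd : d ≠ 0)
    (m r : ℕ) :
    ((c * d : ℕ) : ℚ) ^ ((m : ℤ) - 1) *
        ∑ j ∈ range d, (bernoulli m).eval (((j * c + r).succ : ℚ) / (c * d : ℕ)) =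
      (c : ℚ) ^ ((m : ℤ) - 1) * (bernoulli m).eval ((r.succ : ℚ) / c) := by
  have harg (j : ℕ) : ((j * c + r).succ : ℚ) / (c * d : ℕ) = r.succ / (c * d : ℕ) + j / d := by
    push_cast
    field_simp
    ring
  simp_rw [harg]
  rw [Nat.cast_mul, mul_zpow, mul_assoc, ← Nat.cast_mul,
    zpow_mul_sum_range_bernoulli_eval_add_div hd]
  congr 2
  push_cast
  field_simp

end Polynomial

lemma Finset.sum_range_mul_eq_sum_sum {M : Type*} [AddCommMonoid M] (c d : ℕ) (f : ℕ → M) :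
    ∑ a ∈ range (c * d), f a = ∑ r ∈ range c, ∑ j ∈ range d, f (j * c + r) := by
  induction d with
  | zero => simp
  | succ d ih =>
    rw [Nat.mul_succ, sum_range_add, ih, ← sum_add_distrib]
    simp_rw [sum_range_succ, mul_comm d c]

noncomputable def bernoulliSum {S : Type*} [CommSemiring S] [Algebra ℚ S] {c : ℕ}
    (f : ZMod c → S) (m F : ℕ) : S :=
  algebraMap ℚ S ((F : ℚ) ^ ((m : ℤ) - 1)) *
    ∑ a ∈ range F, f a.succ * algebraMap ℚ S ((Polynomial.bernoulli m).eval (a.succ / F))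

lemma bernoulliSum_mul_right {S : Type*} [CommSemiring S] [Algebra ℚ S] {c d : ℕ}
    (hc : c ≠ 0) (hd : d ≠ 0) (f : ZMod c → S) (m : ℕ) :
    bernoulliSum f m (c * d) = bernoulliSum f m c := by
  unfold bernoulliSum
  rw [sum_range_mul_eq_sum_sum, mul_sum, mul_sum]
  refine sum_congr rfl fun r _ => ?_
  have hf (j : ℕ) : f ((j * c + r).succ : ℕ) = f r.succ := by
    simp [Nat.succ_eq_add_one]
  simp_rw [hf, ← mul_sum, ← map_sum, mul_left_comm _ (f _), ← map_mul,
    Polynomial.zpow_mul_sum_range_bernoulli_eval_mul_add hc hd]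

/-- The generalized Bernoulli number can be computed using any positive multiple `F` of
the conductor of `ψ`. -/
theorem generalBernoulliNumber_eq_sum_of_dvd {S : Type*} [CommSemiring S] [Algebra ℚ S]
    {n : ℕ} (ψ : DirichletChar S n) (m : ℕ) (F : ℕ) (hF : 0 < F)
    (hdvd : ψ.conductor ∣ F) :
    generalBernoulliNumber ψ m =
      algebraMap ℚ S ((F : ℚ) ^ ((m : ℤ) - 1)) *
        ∑ a ∈ Finset.range F,
          ψ.assoPrimitive.asso (a.succ : ZMod ψ.conductor) *
            algebraMap ℚ S ((Polynomial.bernoulli m).eval ((a.succ : ℚ) / (F : ℚ))) := by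
  obtain ⟨d, rfl⟩ := hdvd
  calc generalBernoulliNumber ψ m = bernoulliSum ψ.assoPrimitive.asso m ψ.conductor := rfl
    _ = bernoulliSum ψ.assoPrimitive.asso m (ψ.conductor * d) :=
      (bernoulliSum_mul_right (left_ne_zero_of_mul hF.ne') (right_ne_zero_of_mul hF.ne') _ m).symm
end

section
/- Let p be a prime, d a natural number coprime to p, c an integer with gcd(c, d·p) = 1, and R a normed commutative ring that is a ℚ_p-algebra whose norm is non-Archimedean (‖∑ i, f i‖ ≤ ⨆ i, ‖f i‖ for finite sums). There exists K > 0 such that for every locally constant function f : ZMod d × ℤ_[p] → R, the eventual value L(f) of the eventually constant sequence n ↦ ∑_{a ∈ ZMod(d·p^n)} f(a) • (algebraMap ℚ_[p] R)(E_c(n, a)) satisfies ‖L(f)‖ ≤ K · ‖f‖, where ‖f‖ = sup_{x} ‖f(x)‖. In particular, K can be taken to be 1 + ‖(c : R)‖ + ‖((c−1)/2 : R)‖. -/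
/-!
Since `c` is a unit mod `d p`, it is nonzero, and then
`E_c(n, a) = (c ⌊x / c⌋ - ⌊x⌋) + (c - 1) / 2` with `x = ā / (d p^{n+1})`: the fractional
parts cancel and the distribution is an integer plus a constant. In a non-Archimedean ring
integer multiples do not increase norms, so each term of the Riemann sum has norm at most
`(1 + ‖c‖ + ‖(c - 1) / 2‖) ‖f‖`, and by the non-Archimedean property so does the whole sum.
-/

open scoped BigOperators

/-- The Bernoulli distribution `E_c`. -/
def bernoulliDistribution (p d : ℕ) (c : ℤ) (n : ℕ) (a : ZMod (d * p ^ n)) : ℚ :=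
  Int.fract ((a.val : ℚ) / (d * p ^ (n + 1))) -
    c * Int.fract ((a.val : ℚ) / (c * (d * p ^ (n + 1)))) + (c - 1) / 2
/-- The element of `ZMod d × ℤ_[p]` associated to `a : ZMod (d * p ^ n)` via the
Chinese remainder isomorphism and the canonical lift of representatives. -/
noncomputable def zmodPair (p : ℕ) [Fact p.Prime] {d : ℕ} (hd : d.Coprime p) (n : ℕ)
    (a : ZMod (d * p ^ n)) : ZMod d × ℤ_[p] :=
  ((ZMod.chineseRemainder (hd.pow_right n) a).1,
    (((ZMod.chineseRemainder (hd.pow_right n) a).2).val : ℤ_[p]))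

lemma isUltrametricDist_of_norm_sum_le_iSup {E : Type*} [SeminormedAddCommGroup E]
    (na : ∀ (ι : Type) [Fintype ι] (f : ι → E), ‖∑ i : ι, f i‖ ≤ ⨆ i : ι, ‖f i‖) :
    IsUltrametricDist E :=
  IsUltrametricDist.isUltrametricDist_of_forall_norm_add_le_max_norm fun x y =>
    calc ‖x + y‖ = ‖∑ b : Bool, cond b x y‖ := by
          rw [Fintype.sum_bool, cond_true, cond_false]
      _ ≤ ⨆ b, ‖cond b x y‖ := na Bool _
      _ ≤ max ‖x‖ ‖y‖ := ciSup_le fun b => by cases b <;> simp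

lemma ne_zero_of_gcd_mul_prime_eq_one {p d : ℕ} (hp : p.Prime) {c : ℤ}
    (hc : Int.gcd c (d * p) = 1) : c ≠ 0 := by
  rintro rfl
  have hdp : d * p = 1 := by simpa [Int.gcd, Int.natAbs_mul] using hc
  exact hp.ne_one (Nat.eq_one_of_mul_eq_one_left hdp)

lemma bernoulliDistribution_eq_intCast_add {p d : ℕ} {c : ℤ} (hc : c ≠ 0) (n : ℕ)
    (a : ZMod (d * p ^ n)) :
    bernoulliDistribution p d c n a =
      ((c * ⌊(a.val : ℚ) / (d * p ^ (n + 1)) / c⌋ - ⌊(a.val : ℚ) / (d * p ^ (n + 1))⌋ : ℤ) :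
        ℚ) + ((c : ℚ) - 1) / 2 := by
  have hc' : (c : ℚ) ≠ 0 := Int.cast_ne_zero.mpr hc
  have hdiv :
      (a.val : ℚ) / (c * (d * p ^ (n + 1))) = (a.val : ℚ) / (d * p ^ (n + 1)) / c := by
    rw [div_div, mul_comm (c : ℚ)]
  rw [bernoulliDistribution, hdiv, Int.fract, Int.fract, mul_sub, mul_div_cancel₀ _ hc']
  push_cast
  ring

lemma norm_mul_algebraMap_bernoulliDistribution_le {K R : Type*} [Field K] [CharZero K]
    [SeminormedCommRing R] [IsUltrametricDist R] [Algebra K R] {p d : ℕ} {c : ℤ} (hc : c ≠ 0)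
    (n : ℕ) (a : ZMod (d * p ^ n)) (y : R) :
    ‖y * algebraMap K R (bernoulliDistribution p d c n a)‖ ≤
      (1 + ‖(c : R)‖ + ‖algebraMap K R (((c : K) - 1) / 2)‖) * ‖y‖ := by
  set x : ℚ := (a.val : ℚ) / (d * p ^ (n + 1))
  set q := algebraMap K R (((c : K) - 1) / 2)
  have hsplit : y * algebraMap K R (bernoulliDistribution p d c n a) =
      ⌊x / c⌋ • (y * c) - ⌊x⌋ • y + y * q := by
    rw [bernoulliDistribution_eq_intCast_add hc, Rat.cast_add, map_add, Rat.cast_intCast,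
      map_intCast, zsmul_eq_mul, zsmul_eq_mul]
    push_cast
    ring
  calc ‖y * algebraMap K R (bernoulliDistribution p d c n a)‖
      ≤ ‖⌊x / c⌋ • (y * c)‖ + ‖⌊x⌋ • y‖ + ‖y * q‖ := by
        rw [hsplit]
        exact (norm_add_le _ _).trans (by gcongr; exact norm_sub_le _ _)
    _ ≤ ‖y‖ * ‖(c : R)‖ + ‖y‖ + ‖y‖ * ‖q‖ := by
        gcongr
        · exact (IsUltrametricDist.norm_zsmul_le _ _).trans (norm_mul_le _ _)
        · exact IsUltrametricDist.norm_zsmul_le _ _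
        · exact norm_mul_le _ _
    _ = (1 + ‖(c : R)‖ + ‖q‖) * ‖y‖ := by ring

/-- The Bernoulli measure is bounded : there is a constant `K > 0`, which can be taken to
be `1 + ‖c‖ + ‖(c - 1) / 2‖`, such that the eventual value of the sequence of Riemann sums
of any locally constant function `f` against the Bernoulli distribution has norm at most
`K * ‖f‖`. -/
theorem bernoulliDistribution_measure_bounded {p : ℕ} [Fact p.Prime] {d : ℕ}
    (hd : d.Coprime p) {c : ℤ} (hc : Int.gcd c (d * p) = 1) {R : Type*}
    [NormedCommRing R] [Algebra ℚ_[p] R]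
    (na : ∀ (ι : Type) [Fintype ι] (f : ι → R), ‖∑ i : ι, f i‖ ≤ ⨆ i : ι, ‖f i‖) :
    haveI : NeZero d :=
      ⟨by rintro rfl; exact (Fact.out : p.Prime).ne_one ((Nat.coprime_zero_left p).mp hd)⟩
    ∃ K : ℝ, 0 < K ∧
      K = 1 + ‖((c : ℤ) : R)‖ + ‖(algebraMap ℚ_[p] R) (((c : ℚ_[p]) - 1) / 2)‖ ∧
      ∀ (f : LocallyConstant (ZMod d × ℤ_[p]) R) (L : R),
        (∀ᶠ n in Filter.atTop,
          (∑ a : ZMod (d * p ^ n), f (zmodPair p hd n a) •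
            (algebraMap ℚ_[p] R) (bernoulliDistribution p d c n a)) = L) →
        ‖L‖ ≤ K * ‖f.toContinuousMap‖ := by
  have : NeZero d :=
    ⟨by rintro rfl; exact (Fact.out : p.Prime).ne_one ((Nat.coprime_zero_left p).mp hd)⟩
  have := isUltrametricDist_of_norm_sum_le_iSup na
  have hc0 := ne_zero_of_gcd_mul_prime_eq_one Fact.out hc
  refine ⟨_, by positivity, rfl, fun f L hL => ?_⟩
  obtain ⟨n, rfl⟩ := hL.exists
  refine (na _ _).trans (Real.iSup_le (fun a => ?_) (by positivity))
  exact (norm_mul_algebraMap_bernoulliDistribution_le hc0 n a _).trans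
    (by gcongr; exact f.toContinuousMap.norm_coe_le_norm _)
end

section
/- Let p be a prime, d a natural number with gcd(d, p) = 1, and R a topological space (e.g. a normed commutative ring). For every locally constant function f : ZMod d × ℤ_[p] → R there exists n ∈ ℕ such that f = ∑_{a=0}^{d·p^n − 1} f(a) • χ_{U_{n,a}}, where χ_{U_{n,a}} is the characteristic (locally constant) function of the basic clopen set U_{n,a} = {x ∈ ZMod d × ℤ_[p] : x.1 = a (mod d) and toZModPow n (x.2) = a (mod p^n)}. -/
/-!
The fibres of a locally constant function on the compact space `ℤ_[p]` form an open cover, and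
a Lebesgue number `p ^ (-n)` for it shows that the function factors through `toZModPow n`; as
`ZMod d` is finite, one `n` works for every first coordinate. By the Chinese remainder theorem
the sets `U_{n,a}`, `a < d * p ^ n`, partition `ZMod d × ℤ_[p]`, and `f` is constant, equal to
`f (a, a)`, on each of them.
-/

open scoped BigOperators

lemma continuous_toZModPow (p : ℕ) [Fact p.Prime] (n : ℕ) :
    Continuous (PadicInt.toZModPow (p := p) n) := by
  refine IsLocallyConstant.continuous ?_
  rw [IsLocallyConstant.iff_exists_open]
  intro x
  refine ⟨Metric.ball x ((p : ℝ) ^ (-(n : ℤ))), Metric.isOpen_ball, ?_, ?_⟩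
  · have hp : (0 : ℝ) < p := by exact_mod_cast (Fact.out : p.Prime).pos
    simpa using zpow_pos hp (-(n : ℤ))
  · intro y hy
    have h : ‖y - x‖ ≤ (p : ℝ) ^ (-(n : ℤ)) := le_of_lt (by
      simpa [dist_eq_norm] using hy)
    rw [PadicInt.norm_le_pow_iff_mem_span_pow] at h
    have := (RingHom.sub_mem_ker_iff (PadicInt.toZModPow (p := p) n)).1
      (by rwa [PadicInt.ker_toZModPow])
    exact this

open scoped Classical in
/-- The characteristic function of a clopen set, as a locally constant function. -/
noncomputable def charFn {X : Type*} [TopologicalSpace X] (R : Type*) [Zero R] [One R]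
    {U : Set X} (hU : IsClopen U) : LocallyConstant X R :=
  ⟨fun x => if x ∈ U then (1 : R) else 0, by
    intro s
    by_cases h1 : (1 : R) ∈ s <;> by_cases h0 : (0 : R) ∈ s
    · have : (fun x => if x ∈ U then (1 : R) else 0) ⁻¹' s = Set.univ := by
        ext x; simp only [Set.mem_preimage, Set.mem_univ, iff_true]
        split_ifs <;> assumption
      rw [this]; exact isOpen_univ
    · have : (fun x => if x ∈ U then (1 : R) else 0) ⁻¹' s = U := by
        ext x; simp only [Set.mem_preimage]
        split_ifs with h <;> simp [h, h1, h0]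
      rw [this]; exact hU.isOpen
    · have : (fun x => if x ∈ U then (1 : R) else 0) ⁻¹' s = Uᶜ := by
        ext x; simp only [Set.mem_preimage, Set.mem_compl_iff]
        split_ifs with h <;> simp [h, h1, h0]
      rw [this]; exact hU.compl.isOpen
    · have : (fun x => if x ∈ U then (1 : R) else 0) ⁻¹' s = ∅ := by
        ext x; simp only [Set.mem_preimage, Set.mem_empty_iff_false, iff_false]
        split_ifs <;> assumption
      rw [this]; exact isOpen_empty⟩

/-- The basic clopen subset `U_{n, a}` of `ZMod d × ℤ_[p]`. -/
def clopenFrom (p : ℕ) [Fact p.Prime] (d n a : ℕ) : Set (ZMod d × ℤ_[p]) :=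
  {x : ZMod d × ℤ_[p] | x.1 = (a : ZMod d) ∧ PadicInt.toZModPow n x.2 = (a : ZMod (p ^ n))}

lemma isClopen_clopenFrom (p : ℕ) [Fact p.Prime] (d n a : ℕ) :
    IsClopen (clopenFrom p d n a) := by
  have h1 : IsClopen (Prod.fst ⁻¹' ({(a : ZMod d)} : Set (ZMod d)) :
      Set (ZMod d × ℤ_[p])) :=
    (isClopen_discrete _).preimage continuous_fst
  have h2 : IsClopen ((fun x : ZMod d × ℤ_[p] => PadicInt.toZModPow n x.2) ⁻¹'
      ({(a : ZMod (p ^ n))} : Set (ZMod (p ^ n)))) :=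
    (isClopen_discrete _).preimage ((continuous_toZModPow p n).comp continuous_snd)
  exact h1.inter h2

section CharFn

variable {X : Type*} [TopologicalSpace X] {R : Type*} [NonAssocSemiring R]

theorem coe_charFn {U : Set X} (hU : IsClopen U) : ⇑(charFn R hU) = U.indicator 1 :=
  rfl

theorem eq_sum_smul_charFn_of_partition {ι : Type*} (f : LocallyConstant X R) (s : Finset ι)
    {U : ι → Set X} (hU : ∀ i, IsClopen (U i)) (c : ι → X)
    (hpart : ∀ x, ∃! i, i ∈ s ∧ x ∈ U i) (hconst : ∀ i ∈ s, ∀ x ∈ U i, f x = f (c i)) :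
    f = ∑ i ∈ s, f (c i) • charFn R (hU i) := by
  ext x
  obtain ⟨i, ⟨his, hxi⟩, huniq⟩ := hpart x
  rw [← LocallyConstant.evalAddMonoidHom_apply x (∑ i ∈ s, _), map_sum]
  simp only [LocallyConstant.evalAddMonoidHom_apply, LocallyConstant.coe_smul, Pi.smul_apply,
    coe_charFn, smul_eq_mul]
  rw [Finset.sum_eq_single_of_mem i his, Set.indicator_of_mem hxi, Pi.one_apply, mul_one,
    hconst i his x hxi]
  intro j hjs hji
  rw [Set.indicator_of_notMem fun hxj => hji (huniq j ⟨hjs, hxj⟩), mul_zero]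

end CharFn

theorem Nat.Coprime.existsUnique_lt_natCast_eq {m n : ℕ} (co : m.Coprime n) [NeZero m]
    [NeZero n] (u : ZMod m) (v : ZMod n) :
    ∃! a : ℕ, a < m * n ∧ u = a ∧ v = a := by
  set k := Nat.chineseRemainder co u.val v.val
  refine ⟨k, ⟨Nat.chineseRemainder_lt_mul co _ _ (NeZero.ne m) (NeZero.ne n), ?_, ?_⟩, ?_⟩
  · rw [(ZMod.natCast_eq_natCast_iff _ _ _).2 k.prop.1, ZMod.natCast_zmod_val]
  · rw [(ZMod.natCast_eq_natCast_iff _ _ _).2 k.prop.2, ZMod.natCast_zmod_val]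
  · rintro a ⟨ha, rfl, rfl⟩
    refine Nat.ModEq.eq_of_lt_of_lt (Nat.chineseRemainder_modEq_unique co ?_ ?_) ha
      (Nat.chineseRemainder_lt_mul co _ _ (NeZero.ne m) (NeZero.ne n))
    · rw [← ZMod.natCast_eq_natCast_iff, ZMod.natCast_zmod_val]
    · rw [← ZMod.natCast_eq_natCast_iff, ZMod.natCast_zmod_val]

namespace PadicInt

variable {p : ℕ} [Fact p.Prime]

theorem toZModPow_eq_iff_norm_sub_le (n : ℕ) (z w : ℤ_[p]) :
    toZModPow n z = toZModPow n w ↔ ‖z - w‖ ≤ (p : ℝ) ^ (-(n : ℤ)) := by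
  rw [norm_le_pow_iff_mem_span_pow, ← ker_toZModPow, RingHom.mem_ker, map_sub, sub_eq_zero]

theorem toZModPow_eq_of_le {m n : ℕ} (hmn : m ≤ n) {z w : ℤ_[p]}
    (h : toZModPow n z = toZModPow n w) : toZModPow m z = toZModPow m w := by
  rw [← cast_toZModPow m n hmn, h, cast_toZModPow m n hmn]

end PadicInt

section Factorization

variable {p : ℕ} [Fact p.Prime] {Y : Type*}

theorem IsLocallyConstant.exists_eq_of_toZModPow_eq {g : ℤ_[p] → Y} (hg : IsLocallyConstant g) :
    ∃ n : ℕ, ∀ z w, PadicInt.toZModPow n z = PadicInt.toZModPow n w → g z = g w := by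
  obtain ⟨δ, hδ, hball⟩ := lebesgue_number_lemma_of_metric isCompact_univ
    (fun z => hg.isOpen_fiber (g z)) (fun z _ => Set.mem_iUnion.2 ⟨z, rfl⟩)
  obtain ⟨n, hn⟩ := PadicInt.exists_pow_neg_lt p hδ
  refine ⟨n, fun z w hzw => ?_⟩
  obtain ⟨c, hc⟩ := hball z trivial
  have hw : w ∈ Metric.ball z δ := by
    rw [Metric.mem_ball, dist_eq_norm]
    exact ((PadicInt.toZModPow_eq_iff_norm_sub_le n w z).1 hzw.symm).trans_lt hn
  exact (hc (Metric.mem_ball_self hδ)).trans (hc hw).symm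

theorem IsLocallyConstant.exists_eq_of_fst_eq_of_toZModPow_eq {X : Type*} [TopologicalSpace X]
    [Finite X] {f : X × ℤ_[p] → Y} (hf : IsLocallyConstant f) :
    ∃ n : ℕ, ∀ x y : X × ℤ_[p], x.1 = y.1 →
      PadicInt.toZModPow n x.2 = PadicInt.toZModPow n y.2 → f x = f y := by
  choose N hN using fun c : X =>
    (hf.comp_continuous (Continuous.prodMk_right c)).exists_eq_of_toZModPow_eq
  obtain ⟨n, hNn⟩ := Finite.exists_le N
  refine ⟨n, ?_⟩
  rintro ⟨c, z⟩ ⟨c', w⟩ (rfl : c = c') hzw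
  exact hN c z w (PadicInt.toZModPow_eq_of_le (hNn c) hzw)

end Factorization

/-- Every locally constant function `f` on `ZMod d × ℤ_[p]` is, for some `n`, the sum
over `a < d * p ^ n` of `f a` times the characteristic function of the basic clopen set
`U_{n, a}`. -/
theorem locallyConstant_eq_sum_charFn {p : ℕ} [Fact p.Prime] {d : ℕ} (hd : d.Coprime p)
    {R : Type*} [NormedCommRing R] (f : LocallyConstant (ZMod d × ℤ_[p]) R) :
    ∃ n : ℕ, f = ∑ a ∈ Finset.range (d * p ^ n),
      f ((a : ZMod d), (a : ℤ_[p])) • charFn R (isClopen_clopenFrom p d n a) := by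
  have : NeZero d := ⟨by rintro rfl; exact (Fact.out : p.Prime).ne_one (by simpa using hd)⟩
  obtain ⟨n, hn⟩ := f.isLocallyConstant.exists_eq_of_fst_eq_of_toZModPow_eq
  have : NeZero (p ^ n) := ⟨pow_ne_zero n (Fact.out : p.Prime).ne_zero⟩
  refine ⟨n, eq_sum_smul_charFn_of_partition f _ (isClopen_clopenFrom p d n) _
    (fun x => ?_) fun a _ x hx => ?_⟩
  · simpa [clopenFrom] using
      (hd.pow_right n).existsUnique_lt_natCast_eq x.1 (PadicInt.toZModPow n x.2)
  · exact hn _ _ hx.1 (by rw [hx.2, map_natCast])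
end

section
/- Let p be a prime, d a natural number with gcd(d, p) = 1, and f a locally constant function on ZMod d × ℤ_[p] (with values in any topological space). Then there exists N ∈ ℕ such that for all x, y ∈ ZMod d × ℤ_[p], if x.1 = y.1 and PadicInt.toZModPow N (x.2) = PadicInt.toZModPow N (y.2), then f(x) = f(y); equivalently, the discrete quotient of ZMod d × ℤ_[p] induced by toZModPow N refines the discrete quotient induced by the clopen fibers of f. -/
open PadicInt

lemma toZModPow_fiber_isOpen {p : ℕ} [Fact p.Prime] (n : ℕ) (c : ZMod (p ^ n)) :
    IsOpen {z : ℤ_[p] | toZModPow n z = c} := by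
  rcases Set.eq_empty_or_nonempty {z : ℤ_[p] | toZModPow n z = c} with h | ⟨z₀, hz₀⟩
  · simp [h]
  · have : {z : ℤ_[p] | toZModPow n z = c} = Metric.closedBall z₀ ((p : ℝ) ^ (-(n : ℤ))) := by
      ext z
      simp only [Set.mem_setOf_eq, Metric.mem_closedBall, dist_eq_norm,
        PadicInt.norm_le_pow_iff_mem_span_pow, ← PadicInt.ker_toZModPow, RingHom.mem_ker,
        map_sub, sub_eq_zero]
      rw [show (toZModPow n) z₀ = c from hz₀]
    rw [this]
    have hp := (Fact.out : p.Prime)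
    exact IsUltrametricDist.isOpen_closedBall _ (by
      have : (0:ℝ) < p := by exact_mod_cast hp.pos
      positivity)

/-- For every locally constant function `f` on `ZMod d × ℤ_[p]` there is an `N` such
that `f` only depends on the first coordinate and on the second coordinate modulo
`p ^ N`; i.e. the discrete quotient induced by `toZModPow N` refines the one induced by
the clopen fibers of `f`. -/
theorem locallyConstant_factors_through_toZModPow {p : ℕ} [Fact p.Prime] {d : ℕ}
    (hd : d.Coprime p) {Y : Type*} [TopologicalSpace Y]
    (f : LocallyConstant (ZMod d × ℤ_[p]) Y) :
    ∃ N : ℕ, ∀ x y : ZMod d × ℤ_[p], x.1 = y.1 →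
      PadicInt.toZModPow N x.2 = PadicInt.toZModPow N y.2 → f x = f y := by
  have hp := (Fact.out : p.Prime)
  have hp1 : (1:ℝ) < p := by exact_mod_cast hp.one_lt
  have hd0 : d ≠ 0 := by
    rintro rfl
    simp [Nat.Coprime, Nat.coprime_zero_left] at hd
    exact hp.ne_one hd
  haveI : NeZero d := ⟨hd0⟩
  have key : ∀ x : ZMod d × ℤ_[p], ∃ n : ℕ, ∀ y : ZMod d × ℤ_[p],
      y.1 = x.1 → toZModPow n y.2 = toZModPow n x.2 → f y = f x := by
    intro x
    obtain ⟨U, hU, hxU, hfU⟩ := f.isLocallyConstant.exists_open x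
    obtain ⟨u, hu, v, hv, huv⟩ := mem_nhds_prod_iff.1 (hU.mem_nhds hxU)
    obtain ⟨ε, hε, hball⟩ := Metric.mem_nhds_iff.1 hv
    obtain ⟨n, hn⟩ := exists_pow_lt_of_lt_one hε (by
      rw [one_div]; exact inv_lt_one_of_one_lt₀ hp1 : (1:ℝ)/p < 1)
    refine ⟨n, fun y hy1 hy2 => ?_⟩
    have hmem : y ∈ U := by
      apply huv
      refine ⟨hy1 ▸ mem_of_mem_nhds hu, hball ?_⟩
      rw [Metric.mem_ball, dist_eq_norm]
      calc ‖y.2 - x.2‖ ≤ (p:ℝ) ^ (-(n:ℤ)) := by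
            rw [PadicInt.norm_le_pow_iff_mem_span_pow, ← PadicInt.ker_toZModPow,
              RingHom.mem_ker, map_sub, sub_eq_zero]
            exact hy2
        _ < ε := by
            rw [div_pow, one_pow] at hn
            rw [zpow_neg, zpow_natCast, ← one_div]
            exact hn
    exact (hfU y hmem).trans (hfU x hxU).symm
  choose n hn using key
  set V : ZMod d × ℤ_[p] → Set (ZMod d × ℤ_[p]) :=
    fun x => {y | y.1 = x.1 ∧ toZModPow (n x) y.2 = toZModPow (n x) x.2} with hV
  have hVopen : ∀ x, IsOpen (V x) := by
    intro x
    have h1 : IsOpen {y : ZMod d × ℤ_[p] | y.1 = x.1} :=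
      (isOpen_discrete {x.1}).preimage continuous_fst
    have h2 : IsOpen {y : ZMod d × ℤ_[p] | toZModPow (n x) y.2 = toZModPow (n x) x.2} :=
      (toZModPow_fiber_isOpen (n x) (toZModPow (n x) x.2)).preimage continuous_snd
    exact h1.inter h2
  obtain ⟨t, -, ht⟩ := isCompact_univ.elim_nhds_subcover V
    (fun x _ => (hVopen x).mem_nhds ⟨rfl, rfl⟩)
  refine ⟨t.sup n, fun x y h1 h2 => ?_⟩
  obtain ⟨c, hc, hxc⟩ := Set.mem_iUnion₂.1 (ht (Set.mem_univ x))
  have hle : n c ≤ t.sup n := Finset.le_sup hc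
  have hyc : y ∈ V c := by
    refine ⟨h1 ▸ hxc.1, ?_⟩
    have : toZModPow (n c) y.2 = toZModPow (n c) x.2 := by
      rw [← PadicInt.cast_toZModPow (n c) (t.sup n) hle, ← h2,
        PadicInt.cast_toZModPow (n c) (t.sup n) hle]
    rw [this]
    exact hxc.2
  rw [hn c y hyc.1 hyc.2, hn c x hxc.1 hxc.2]
end
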